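/- Let E be a Banach f-algebra and (x_α)_{α∈A}, (y_β)_{β∈B} nets in E with x_α →mw x and y_β →mw y for some x, y ∈ E. If (x_α) is monotone (increasing), then the net (x_α * y_β)_{(α,β)∈A×B} is mw-convergent to x*y. -/

import Mathlib

/-!
A continuous functional `f` on a normed lattice is the difference of the positive functionals
`f⁺` and `f⁺ - f`, where `f⁺ u = sup f([0, u])` for `u ≥ 0` (Riesz–Kantorovich); hence a net
squeezed between `0` and a weakly null net is weakly null. For monotone `x` and `β ≥ α`,
`(x α - a)⁺ * w ≤ |x β - a| * w`, so `(x α - a)⁺ * w = 0`. Thus for `α ≥ α₀` the term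
`|x α - a| * |y β - b| * u` equals `(x α - a)⁻ * |y β - b| * u ≤ (x α₀ - a)⁻ * |y β - b| * u`,
and `|x α * y β - a * b| * u` is squeezed under three weakly null nets.
-/

open Filter Topology

/-- A net `x : ι → E` (along a filter `l`) in a Banach `f`-algebra is *multiplicative weak
convergent* (`mw`-convergent) to `a` if `|x i - a| * u` converges weakly to `0` for every
`u ≥ 0`, i.e. `f (|x i - a| * u) → 0` for every continuous linear functional `f` on `E`. -/
def MWTendsto {E : Type*} [NonUnitalNormedCommRing E] [Lattice E] [NormedSpace ℝ E]
    {ι : Type*} (l : Filter ι) (x : ι → E) (a : E) : Prop :=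
  ∀ u : E, 0 ≤ u → ∀ f : E →L[ℝ] ℝ, Tendsto (fun i => f (|x i - a| * u)) l (𝓝 0)

section LatticeOrderedGroup

variable {G : Type*} [AddCommGroup G] [Lattice G] [IsOrderedAddMonoid G]

theorem posPart_le_abs (x : G) : x⁺ ≤ |x| := sup_le (le_abs_self x) (abs_nonneg x)

theorem negPart_le_abs (x : G) : x⁻ ≤ |x| := sup_le (neg_le_abs x) (abs_nonneg x)

theorem posPart_add_add_negPart_add_negPart (x y : G) :
    (x + y)⁺ + (x⁻ + y⁻) = (x + y)⁻ + (x⁺ + y⁺) := by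
  rw [add_comm (x + y)⁻, ← sub_eq_sub_iff_add_eq_add, posPart_sub_negPart,
    add_sub_add_comm, posPart_sub_negPart, posPart_sub_negPart]

open Pointwise in
theorem Set.Icc_zero_add_Icc_zero {u w : G} (hu : 0 ≤ u) (hw : 0 ≤ w) :
    Icc 0 u + Icc 0 w = Icc 0 (u + w) := by
  refine subset_antisymm ?_ fun v ⟨hv0, hvuw⟩ => ?_
  · rintro _ ⟨v₁, ⟨h₁0, h₁u⟩, v₂, ⟨h₂0, h₂w⟩, rfl⟩
    exact ⟨add_nonneg h₁0 h₂0, add_le_add h₁u h₂w⟩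
  · refine ⟨v ⊓ u, ⟨le_inf hv0 hu, inf_le_right⟩, v - v ⊓ u,
      ⟨sub_nonneg.2 inf_le_left, ?_⟩, add_sub_cancel _ _⟩
    rw [sub_inf, sub_self]
    exact sup_le hw (sub_le_iff_le_add.2 (by rwa [add_comm]))

end LatticeOrderedGroup

section SolidNorm

variable {E : Type*} [NormedAddCommGroup E] [Lattice E] [IsOrderedAddMonoid E] [HasSolidNorm E]

theorem norm_posPart_le (x : E) : ‖x⁺‖ ≤ ‖x‖ :=
  norm_le_norm_of_abs_le_abs <| (abs_of_nonneg (posPart_nonneg x)).trans_le (posPart_le_abs x)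

theorem norm_negPart_le (x : E) : ‖x⁻‖ ≤ ‖x‖ :=
  norm_le_norm_of_abs_le_abs <| (abs_of_nonneg (negPart_nonneg x)).trans_le (negPart_le_abs x)

end SolidNorm

section LatticeOrderedRing

variable {R : Type*} [NonUnitalRing R] [Lattice R] [IsOrderedAddMonoid R]

theorem PosMulMono.of_mul_nonneg (h : ∀ a b : R, 0 ≤ a → 0 ≤ b → 0 ≤ a * b) : PosMulMono R :=
  ⟨fun a ha b c hbc => sub_nonneg.1 <| by simpa only [mul_sub] using h a _ ha (sub_nonneg.2 hbc)⟩

variable [PosMulMono R]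

theorem abs_mul_le_abs_mul_abs (a b : R) : |a * b| ≤ |a| * |b| := by
  have hP : 0 ≤ a⁺ * b⁺ + a⁻ * b⁻ := by positivity
  have hN : 0 ≤ a⁺ * b⁻ + a⁻ * b⁺ := by positivity
  have hab : a * b = (a⁺ * b⁺ + a⁻ * b⁻) + -(a⁺ * b⁻ + a⁻ * b⁺) := by
    conv_lhs => rw [← posPart_sub_negPart a, ← posPart_sub_negPart b]
    noncomm_ring
  have habs : |a| * |b| = (a⁺ * b⁺ + a⁻ * b⁻) + (a⁺ * b⁻ + a⁻ * b⁺) := by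
    rw [← posPart_add_negPart a, ← posPart_add_negPart b]
    noncomm_ring
  rw [hab, habs]
  exact (abs_add_le _ _).trans_eq (by rw [abs_neg, abs_of_nonneg hP, abs_of_nonneg hN])

theorem abs_mul_sub_mul_le (p q a b : R) :
    |p * q - a * b| ≤ |p - a| * |q - b| + |a| * |q - b| + |p - a| * |b| :=
  calc |p * q - a * b| = |(p - a) * (q - b) + a * (q - b) + (p - a) * b| := by
        congr 1; noncomm_ring
    _ ≤ |(p - a) * (q - b)| + |a * (q - b)| + |(p - a) * b| :=
        (abs_add_le _ _).trans (add_le_add_left (abs_add_le _ _) _)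
    _ ≤ |p - a| * |q - b| + |a| * |q - b| + |p - a| * |b| := by
        gcongr <;> exact abs_mul_le_abs_mul_abs _ _

end LatticeOrderedRing

namespace ContinuousLinearMap

open Set

variable {E : Type*} [NormedAddCommGroup E] [Lattice E] [IsOrderedAddMonoid E] [HasSolidNorm E]
  [NormedSpace ℝ E] (f : E →L[ℝ] ℝ)

noncomputable def supIcc (u : E) : ℝ := sSup (f '' Icc 0 u)

theorem apply_le_norm_mul_of_mem_Icc {u v : E} (hv : v ∈ Icc 0 u) : f v ≤ ‖f‖ * ‖u‖ := by
  have hvu : ‖v‖ ≤ ‖u‖ := norm_le_norm_of_abs_le_abs <| by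
    rw [abs_of_nonneg hv.1, abs_of_nonneg (hv.1.trans hv.2)]; exact hv.2
  exact (le_abs_self _).trans <| (f.le_opNorm v).trans <| by gcongr

theorem bddAbove_image_Icc (u : E) : BddAbove (f '' Icc 0 u) :=
  ⟨‖f‖ * ‖u‖, forall_mem_image.2 fun _ => f.apply_le_norm_mul_of_mem_Icc⟩

theorem apply_le_supIcc {u v : E} (hv : v ∈ Icc 0 u) : f v ≤ f.supIcc u :=
  le_csSup (f.bddAbove_image_Icc u) (mem_image_of_mem f hv)

theorem supIcc_nonneg {u : E} (hu : 0 ≤ u) : 0 ≤ f.supIcc u := by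
  simpa using f.apply_le_supIcc (left_mem_Icc.2 hu)

theorem supIcc_le {u : E} (hu : 0 ≤ u) : f.supIcc u ≤ ‖f‖ * ‖u‖ :=
  csSup_le ((nonempty_Icc.2 hu).image f)
    (forall_mem_image.2 fun _ => f.apply_le_norm_mul_of_mem_Icc)

theorem supIcc_add {u w : E} (hu : 0 ≤ u) (hw : 0 ≤ w) :
    f.supIcc (u + w) = f.supIcc u + f.supIcc w := by
  rw [supIcc, ← Icc_zero_add_Icc_zero hu hw, image_add]
  exact csSup_add ((nonempty_Icc.2 hu).image f) (f.bddAbove_image_Icc u)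
    ((nonempty_Icc.2 hw).image f) (f.bddAbove_image_Icc w)

theorem supIcc_zero : f.supIcc 0 = 0 := by
  simpa using f.supIcc_add le_rfl le_rfl

theorem supIcc_posPart_sub_supIcc_negPart_add (x y : E) :
    f.supIcc (x + y)⁺ - f.supIcc (x + y)⁻ =
      (f.supIcc x⁺ - f.supIcc x⁻) + (f.supIcc y⁺ - f.supIcc y⁻) := by
  have h := congrArg f.supIcc (posPart_add_add_negPart_add_negPart x y)
  simp only [f.supIcc_add, posPart_nonneg, negPart_nonneg, add_nonneg] at h
  linarith

theorem abs_supIcc_posPart_sub_supIcc_negPart_le (x : E) :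
    |f.supIcc x⁺ - f.supIcc x⁻| ≤ ‖f‖ * ‖x‖ := by
  have hpos : f.supIcc x⁺ ≤ ‖f‖ * ‖x‖ :=
    (f.supIcc_le (posPart_nonneg x)).trans (by gcongr; exact norm_posPart_le x)
  have hneg : f.supIcc x⁻ ≤ ‖f‖ * ‖x‖ :=
    (f.supIcc_le (negPart_nonneg x)).trans (by gcongr; exact norm_negPart_le x)
  have hpos₀ := f.supIcc_nonneg (posPart_nonneg x)
  have hneg₀ := f.supIcc_nonneg (negPart_nonneg x)
  exact abs_sub_le_iff.2 ⟨by linarith, by linarith⟩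

noncomputable def positivePart : E →L[ℝ] ℝ :=
  let g : E →+ ℝ :=
    .mk' (fun x => f.supIcc x⁺ - f.supIcc x⁻) f.supIcc_posPart_sub_supIcc_negPart_add
  g.toRealLinearMap <| AddMonoidHomClass.continuous_of_bound g ‖f‖
    f.abs_supIcc_posPart_sub_supIcc_negPart_le

theorem positivePart_apply_of_nonneg {v : E} (hv : 0 ≤ v) : f.positivePart v = f.supIcc v := by
  simp [positivePart, posPart_of_nonneg hv, negPart_of_nonneg hv, supIcc_zero]

theorem positivePart_nonneg {v : E} (hv : 0 ≤ v) : 0 ≤ f.positivePart v :=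
  (f.positivePart_apply_of_nonneg hv).symm ▸ f.supIcc_nonneg hv

theorem apply_le_positivePart {v : E} (hv : 0 ≤ v) : f v ≤ f.positivePart v :=
  (f.positivePart_apply_of_nonneg hv).symm ▸ f.apply_le_supIcc (right_mem_Icc.2 hv)

end ContinuousLinearMap

section WeakConvergence

variable {E : Type*} [NormedAddCommGroup E] [Lattice E] [IsOrderedAddMonoid E] [HasSolidNorm E]
  [NormedSpace ℝ E] {ι : Type*} {l : Filter ι}

theorem tendsto_apply_zero_of_nonneg_of_le {z w : ι → E} (hz : ∀ᶠ i in l, 0 ≤ z i ∧ z i ≤ w i)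
    (hw : ∀ g : E →L[ℝ] ℝ, Tendsto (fun i => g (w i)) l (𝓝 0)) (f : E →L[ℝ] ℝ) :
    Tendsto (fun i => f (z i)) l (𝓝 0) := by
  have of_nonneg : ∀ g : E →L[ℝ] ℝ, (∀ v, 0 ≤ v → 0 ≤ g v) →
      Tendsto (fun i => g (z i)) l (𝓝 0) := fun g hg =>
    squeeze_zero' (hz.mono fun _ h => hg _ h.1)
      (hz.mono fun _ h => by simpa using hg _ (sub_nonneg.2 h.2)) (hw g)
  have hsub : ∀ v, 0 ≤ v → 0 ≤ (f.positivePart - f) v := fun v hv =>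
    sub_nonneg.2 (f.apply_le_positivePart hv)
  simpa using (of_nonneg _ fun _ => f.positivePart_nonneg).sub (of_nonneg _ hsub)

theorem eq_zero_of_nonneg_of_eventually_le [l.NeBot] {v : E} {w : ι → E} (hv : 0 ≤ v)
    (hvw : ∀ᶠ i in l, v ≤ w i) (hw : ∀ g : E →L[ℝ] ℝ, Tendsto (fun i => g (w i)) l (𝓝 0)) :
    v = 0 :=
  SeparatingDual.eq_zero_of_forall_dual_eq_zero (R := ℝ) fun f =>
    tendsto_nhds_unique tendsto_const_nhds <|
      tendsto_apply_zero_of_nonneg_of_le (z := fun _ => v) (hvw.mono fun _ h => ⟨hv, h⟩) hw f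

end WeakConvergence

theorem abs_mul_sub_mul_mul_le {R : Type*} [NonUnitalCommRing R] [Lattice R]
    [IsOrderedAddMonoid R] [PosMulMono R] [MulPosMono R] {p p₀ q a b u : R} (hp : p₀ ≤ p)
    (hvanish : (p - a)⁺ * (|q - b| * u) = 0) (hu : 0 ≤ u) :
    |p * q - a * b| * u ≤ |q - b| * ((p₀ - a)⁻ * u) + |q - b| * (|a| * u) + |p - a| * (|b| * u) :=
  have hneg : |p - a| * (|q - b| * u) = (p - a)⁻ * (|q - b| * u) := by
    rw [← posPart_add_negPart, add_mul, hvanish, zero_add]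
  calc |p * q - a * b| * u ≤ (|p - a| * |q - b| + |a| * |q - b| + |p - a| * |b|) * u :=
        mul_le_mul_of_nonneg_right (abs_mul_sub_mul_le p q a b) hu
    _ = (p - a)⁻ * (|q - b| * u) + |q - b| * (|a| * u) + |p - a| * (|b| * u) := by
        rw [add_mul, add_mul, mul_assoc, mul_assoc, mul_assoc, mul_left_comm |a|, hneg]
    _ ≤ |q - b| * ((p₀ - a)⁻ * u) + |q - b| * (|a| * u) + |p - a| * (|b| * u) := by
        gcongr ?_ + _ + _
        exact (mul_le_mul_of_nonneg_right (negPart_anti (sub_le_sub_right hp a))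
          (mul_nonneg (abs_nonneg _) hu)).trans_eq (mul_left_comm _ _ _)

section MWConvergence

variable {E : Type*} [NonUnitalNormedCommRing E] [Lattice E] [IsOrderedAddMonoid E]
  [HasSolidNorm E] [PosMulMono E] [MulPosMono E] [NormedSpace ℝ E]

theorem MWTendsto.posPart_sub_mul_eq_zero {A : Type*} [Nonempty A] [SemilatticeSup A]
    {x : A → E} {a : E} (hx : MWTendsto atTop x a) (hmono : Monotone x) (α : A) {w : E}
    (hw : 0 ≤ w) : (x α - a)⁺ * w = 0 := by
  refine eq_zero_of_nonneg_of_eventually_le (mul_nonneg (posPart_nonneg _) hw) ?_ (hx w hw)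
  filter_upwards [eventually_ge_atTop α] with β hβ
  exact mul_le_mul_of_nonneg_right
    ((posPart_mono (sub_le_sub_right (hmono hβ) a)).trans (posPart_le_abs _)) hw

end MWConvergence

theorem mw_mul_general
    {E : Type*} [NonUnitalNormedCommRing E] [Lattice E]
    [CovariantClass E E (· + ·) (· ≤ ·)] [NormedSpace ℝ E]
    (hsolid : ∀ a b : E, |a| ≤ |b| → ‖a‖ ≤ ‖b‖)
    (hmulpos : ∀ a b : E, 0 ≤ a → 0 ≤ b → 0 ≤ a * b)
    {A : Type*} [Nonempty A] [SemilatticeSup A]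
    {B : Type*} [SemilatticeSup B]
    (x : A → E) (y : B → E) (a b : E)
    (hx : MWTendsto atTop x a) (hy : MWTendsto atTop y b) (hmono : Monotone x) :
    MWTendsto atTop (fun p : A × B => x p.1 * y p.2) (a * b) := by
  have : IsOrderedAddMonoid E := { add_le_add_left := fun _ _ h c => add_le_add_left h c }
  have : HasSolidNorm E := ⟨hsolid⟩
  have : PosMulMono E := .of_mul_nonneg hmulpos
  have : MulPosMono E := posMulMono_iff_mulPosMono.1 this
  intro u hu f
  obtain ⟨α₀⟩ := ‹Nonempty A›
  rw [← prod_atTop_atTop_eq]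
  refine tendsto_apply_zero_of_nonneg_of_le (w := fun p => |y p.2 - b| * ((x α₀ - a)⁻ * u) +
    |y p.2 - b| * (|a| * u) + |x p.1 - a| * (|b| * u)) ?_ (fun g => ?_) f
  · filter_upwards [tendsto_fst.eventually (eventually_ge_atTop α₀)] with p hp
    exact ⟨mul_nonneg (abs_nonneg _) hu, abs_mul_sub_mul_mul_le (hmono hp)
      (hx.posPart_sub_mul_eq_zero hmono _ (mul_nonneg (abs_nonneg _) hu)) hu⟩
  · simpa using (((hy _ (mul_nonneg (negPart_nonneg _) hu) g).comp tendsto_snd).add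
      ((hy _ (mul_nonneg (abs_nonneg _) hu) g).comp tendsto_snd)).add
      ((hx _ (mul_nonneg (abs_nonneg _) hu) g).comp tendsto_fst)

/-- If `x_α →mw x`, `y_β →mw y` and `(x_α)` is monotone (increasing), then
`x_α * y_β →mw x * y`. -/
theorem mw_mul
    {E : Type*} [NonUnitalNormedCommRing E] [Lattice E]
    [CovariantClass E E (· + ·) (· ≤ ·)] [NormedSpace ℝ E] [CompleteSpace E]
    (hsolid : ∀ a b : E, |a| ≤ |b| → ‖a‖ ≤ ‖b‖)
    (hmulpos : ∀ a b : E, 0 ≤ a → 0 ≤ b → 0 ≤ a * b)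
    (hfalg : ∀ a b c : E, a ⊓ b = 0 → 0 ≤ c → (a * c) ⊓ b = 0)
    {A : Type*} [Nonempty A] [SemilatticeSup A]
    {B : Type*} [Nonempty B] [SemilatticeSup B]
    (x : A → E) (y : B → E) (a b : E)
    (hx : MWTendsto atTop x a) (hy : MWTendsto atTop y b) (hmono : Monotone x) :
    MWTendsto atTop (fun p : A × B => x p.1 * y p.2) (a * b) :=
  mw_mul_general hsolid hmulpos x y a b hx hy hmono
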